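/- arXiv:2605.01481 — 10 statements merged into one kernel-verified Lean document; each statement's English description precedes it below -/
import Mathlib

section
/- If a finite simple graph G on vertex set C with edge weights w satisfies: (C1) G is connected, (C2) every cut of G has nonnegative weight, and (C3) whenever {i,j} and {j,k} are edges of G but {i,k} is not, then w(i,j)+w(j,k) < 0 — then G is a complete graph. -/
open Finset
open scoped Classical

/-- The closed neighborhood of `v` as a `Finset`. -/
noncomputable def closedNbhdFinset {C : Type*} [Fintype C] (G : SimpleGraph C) (v : C) :
    Finset C :=
  Finset.univ.filter (fun u => u = v ∨ G.Adj v u)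

/-- If a finite simple graph `G` on vertex set `C` with symmetric edge weights `w`
satisfies (C1) connectedness, (C2) every cut has nonnegative weight, and
(C3) whenever `{i,j}` and `{j,k}` are edges but `{i,k}` is not, `w i j + w j k < 0`,
then `G` is complete. -/
theorem c1_c2_c3_implies_complete
    {C : Type*} [Fintype C] [DecidableEq C] [Nonempty C]
    (G : SimpleGraph C) (w : C → C → ℝ)
    (hw : ∀ i j : C, w i j = w j i)
    (hC1 : G.Connected)
    (hC2 : ∀ S : Finset C, S.Nonempty → Sᶜ.Nonempty →
      0 ≤ ∑ i ∈ S, ∑ j ∈ Sᶜ, if G.Adj i j then w i j else 0)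
    (hC3 : ∀ i j k : C, i ≠ j → j ≠ k → i ≠ k →
      G.Adj i j → G.Adj j k → ¬ G.Adj i k → w i j + w j k < 0) :
    ∀ i j : C, i ≠ j → G.Adj i j := by
  -- notation for closed neighborhoods
  set nb : C → Finset C := fun v => closedNbhdFinset G v with hnb
  have mem_nb : ∀ v u : C, u ∈ nb v ↔ (u = v ∨ G.Adj v u) := by
    intro v u
    simp [hnb, closedNbhdFinset]
  -- Key step: no induced path of length 2, i.e. adjacency is "transitive".
  have key : ∀ v x y : C, G.Adj v x → G.Adj x y → v ≠ y → G.Adj v y := by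
    intro v x y hvx hxy hvy
    by_contra hadj
    -- the set of ordered induced paths (v, x, y)
    set T : Finset (C × C × C) :=
      Finset.univ.filter
        (fun t => G.Adj t.1 t.2.1 ∧ G.Adj t.2.1 t.2.2 ∧ ¬ G.Adj t.1 t.2.2 ∧ t.1 ≠ t.2.2)
      with hT
    have htmem : (v, x, y) ∈ T := by
      simp only [hT, Finset.mem_filter, Finset.mem_univ, true_and]
      exact ⟨hvx, hxy, hadj, hvy⟩
    have hTne : T.Nonempty := ⟨_, htmem⟩
    -- (1) each closed-neighborhood cut is nonnegative
    have h1 : 0 ≤ ∑ v : C, ∑ a ∈ nb v, ∑ b ∈ (nb v)ᶜ, (if G.Adj a b then w a b else 0) := by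
      apply Finset.sum_nonneg
      intro u _
      by_cases hc : ((nb u)ᶜ : Finset C).Nonempty
      · exact hC2 (nb u) ⟨u, (mem_nb u u).2 (Or.inl rfl)⟩ hc
      · rw [Finset.not_nonempty_iff_eq_empty] at hc
        simp [hc]
    -- (2) the double-counting identity
    have h2 : (∑ v : C, ∑ a ∈ nb v, ∑ b ∈ (nb v)ᶜ, (if G.Adj a b then w a b else 0))
        = ∑ t ∈ T, w t.2.1 t.2.2 := by
      rw [hT, Finset.sum_filter, Fintype.sum_prod_type]
      refine Finset.sum_congr rfl (fun u _ => ?_)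
      rw [Fintype.sum_prod_type]
      -- restrict the RHS sums: outer to nb u, inner to (nb u)ᶜ
      have hsub : ∀ a : C, a ∉ nb u →
          (∑ b : C, if G.Adj u a ∧ G.Adj a b ∧ ¬G.Adj u b ∧ u ≠ b then w a b else 0) = 0 := by
        intro a ha
        apply Finset.sum_eq_zero
        intro b _
        rw [if_neg]
        intro hcond
        exact ha ((mem_nb u a).2 (Or.inr hcond.1))
      rw [← Finset.sum_subset (Finset.subset_univ (nb u)) (fun a _ ha => hsub a ha)]
      refine Finset.sum_congr rfl (fun a ha => ?_)
      have hsub2 : ∀ b : C, b ∈ Finset.univ → b ∉ (nb u)ᶜ →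
          (if G.Adj u a ∧ G.Adj a b ∧ ¬G.Adj u b ∧ u ≠ b then w a b else 0) = 0 := by
        intro b _ hb
        rw [Finset.mem_compl, not_not, mem_nb] at hb
        rw [if_neg]
        rintro ⟨-, -, hnadj, hne⟩
        rcases hb with rfl | hb
        · exact hne rfl
        · exact hnadj hb
      rw [← Finset.sum_subset (Finset.subset_univ ((nb u)ᶜ)) hsub2]
      refine Finset.sum_congr rfl (fun b hb => ?_)
      rw [Finset.mem_compl, mem_nb] at hb
      push_neg at hb
      obtain ⟨hbu, hnadj⟩ := hb
      rw [mem_nb] at ha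
      by_cases hab : G.Adj a b
      · rcases ha with rfl | hua
        · exact absurd hab hnadj
        · rw [if_pos hab, if_pos ⟨hua, hab, hnadj, Ne.symm hbu⟩]
      · rw [if_neg hab, if_neg (fun h => hab h.2.1)]
    -- (3) reindex by the involution (v,x,y) ↦ (y,x,v)
    have h3 : (∑ t ∈ T, w t.2.1 t.2.2) = ∑ t ∈ T, w t.2.1 t.1 := by
      refine Finset.sum_nbij' (fun t => (t.2.2, t.2.1, t.1)) (fun t => (t.2.2, t.2.1, t.1))
        ?_ ?_ ?_ ?_ ?_
      all_goals
        intro t ht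
      · simp only [hT, Finset.mem_filter, Finset.mem_univ, true_and] at ht ⊢
        obtain ⟨ha, hb, hc, hd⟩ := ht
        exact ⟨hb.symm, ha.symm, fun h => hc h.symm, hd.symm⟩
      · simp only [hT, Finset.mem_filter, Finset.mem_univ, true_and] at ht ⊢
        obtain ⟨ha, hb, hc, hd⟩ := ht
        exact ⟨hb.symm, ha.symm, fun h => hc h.symm, hd.symm⟩
      · rfl
      · rfl
      · rfl
    -- (4) each induced path has negative weight, so the total is negative
    have h5 : (∑ t ∈ T, w t.2.1 t.2.2) + (∑ t ∈ T, w t.2.1 t.1) < 0 := by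
      rw [← Finset.sum_add_distrib]
      have : (∑ t ∈ T, (w t.2.1 t.2.2 + w t.2.1 t.1)) < ∑ _t ∈ T, (0 : ℝ) := by
        refine Finset.sum_lt_sum_of_nonempty hTne (fun t ht => ?_)
        simp only [hT, Finset.mem_filter, Finset.mem_univ, true_and] at ht
        obtain ⟨ha, hb, hc, hd⟩ := ht
        have := hC3 t.1 t.2.1 t.2.2 ha.ne hb.ne hd ha hb hc
        rw [hw t.1 t.2.1] at this
        linarith
      simpa using this
    rw [h2] at h1
    rw [h3] at h5
    linarith
  -- From connectivity plus transitivity, the graph is complete.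
  have main : ∀ a b : C, Relation.ReflTransGen G.Adj a b → a = b ∨ G.Adj a b := by
    intro a b h
    induction h with
    | refl => exact Or.inl rfl
    | @tail p q hap hpq ih =>
      rcases ih with rfl | hadj
      · exact Or.inr hpq
      · by_cases haq : a = q
        · exact Or.inl haq
        · exact Or.inr (key a p q hadj hpq haq)
  intro i j hij
  have hr : Relation.ReflTransGen G.Adj i j := by
    rw [← SimpleGraph.reachable_iff_reflTransGen]
    exact hC1.preconnected i j
  exact (main i j hr).resolve_left hij
end

section
/- Let G be a connected finite simple graph with real edge weights satisfying (C2) (every cut has nonnegative weight) and (C3) (if {i,j},{j,k} ∈ E but {i,k} ∉ E then w(i,j)+w(j,k) < 0). Let (S,T) be a minimum-weight cut of G that, among all minimum-weight cuts, minimizes the number of crossing edges. Then the induced subgraph on T (with restricted weights) also satisfies (C1), (C2), and (C3). -/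
open Finset
open scoped Classical



/-- Weight of the cut `(S,T)` in graph `G` with edge weights `w`. -/
noncomputable def cutW {C : Type*} [Fintype C] (G : SimpleGraph C)
    (w : C → C → ℝ) (S T : Finset C) : ℝ :=
  ∑ i ∈ S, ∑ j ∈ T, if G.Adj i j then w i j else 0

/-- Number of edges of `G` crossing the cut `(S,T)`. -/
noncomputable def nCross {C : Type*} [Fintype C] (G : SimpleGraph C)
    (S T : Finset C) : ℕ :=
  ∑ i ∈ S, ∑ j ∈ T, if G.Adj i j then 1 else 0

set_option linter.unusedSectionVars false
set_option maxHeartbeats 1000000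

section Helpers
variable {C : Type*} [Fintype C] [DecidableEq C] (G : SimpleGraph C) (w : C → C → ℝ)

lemma cutW_union_right {X Y Z : Finset C} (h : Disjoint Y Z) :
    cutW G w X (Y ∪ Z) = cutW G w X Y + cutW G w X Z := by
  simp [cutW, Finset.sum_union h, Finset.sum_add_distrib]

lemma cutW_union_left {X Y Z : Finset C} (h : Disjoint X Y) :
    cutW G w (X ∪ Y) Z = cutW G w X Z + cutW G w Y Z := by
  simp [cutW, Finset.sum_union h]

lemma cutW_symm (hw : ∀ i j : C, w i j = w j i) (X Y : Finset C) :
    cutW G w X Y = cutW G w Y X := by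
  rw [cutW, Finset.sum_comm]
  refine Finset.sum_congr rfl fun j _ => Finset.sum_congr rfl fun i _ => ?_
  by_cases h : G.Adj i j
  · simp [h, h.symm, hw i j]
  · rw [if_neg h, if_neg (fun h' : G.Adj j i => h h'.symm)]

lemma nCross_union_right {X Y Z : Finset C} (h : Disjoint Y Z) :
    nCross G X (Y ∪ Z) = nCross G X Y + nCross G X Z := by
  simp [nCross, Finset.sum_union h, Finset.sum_add_distrib]

lemma nCross_union_left {X Y Z : Finset C} (h : Disjoint X Y) :
    nCross G (X ∪ Y) Z = nCross G X Z + nCross G Y Z := by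
  simp [nCross, Finset.sum_union h]

lemma nCross_eq_zero {X Y : Finset C} (h : nCross G X Y = 0) :
    ∀ i ∈ X, ∀ j ∈ Y, ¬ G.Adj i j := by
  intro i hi j hj hadj
  rw [nCross, Finset.sum_eq_zero_iff] at h
  have := (Finset.sum_eq_zero_iff.mp (h i hi)) j hj
  simp [hadj] at this

lemma cutW_no_edge {X Y : Finset C} (h : ∀ i ∈ X, ∀ j ∈ Y, ¬ G.Adj i j) :
    cutW G w X Y = 0 := by
  rw [cutW]
  refine Finset.sum_eq_zero fun i hi => Finset.sum_eq_zero fun j hj => ?_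
  simp [h i hi j hj]

lemma nCross_no_edge {X Y : Finset C} (h : ∀ i ∈ X, ∀ j ∈ Y, ¬ G.Adj i j) :
    nCross G X Y = 0 := by
  rw [nCross]
  refine Finset.sum_eq_zero fun i hi => Finset.sum_eq_zero fun j hj => ?_
  simp [h i hi j hj]

lemma walk_cross {G : SimpleGraph C} {X : Finset C} :
    ∀ {u v : C}, G.Walk u v → u ∈ X → v ∉ X →
      ∃ i ∈ X, ∃ j, j ∉ X ∧ G.Adj i j := by
  intro u v p
  induction p with
  | nil => intro h1 h2; exact absurd h1 h2
  | @cons a b c h p ih =>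
    intro h1 h2
    by_cases hb : b ∈ X
    · exact ih hb h2
    · exact ⟨a, h1, b, hb, h⟩

lemma exists_cross (hC1 : G.Connected) {X : Finset C}
    (hX : X.Nonempty) (hXc : Xᶜ.Nonempty) :
    ∃ i ∈ X, ∃ j, j ∉ X ∧ G.Adj i j := by
  obtain ⟨u, hu⟩ := hX
  obtain ⟨v, hv⟩ := hXc
  exact walk_cross ((hC1 u v).some) hu (Finset.mem_compl.mp hv)

end Helpers

/-- If `G` is connected, satisfies (C2) and (C3), and `(S, Sᶜ)` is a minimum-weight
cut which, among all minimum-weight cuts, minimizes the number of crossing edges,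
then the induced subgraph on `T = Sᶜ` (with restricted weights) satisfies
(C1) connectedness, (C2), and (C3). -/
theorem min_cut_side_satisfies_C1_C2_C3
    {C : Type*} [Fintype C] [DecidableEq C]
    (G : SimpleGraph C) (w : C → C → ℝ)
    (hw : ∀ i j : C, w i j = w j i)
    (hC1 : G.Connected)
    (hC2 : ∀ S' : Finset C, S'.Nonempty → S'ᶜ.Nonempty → 0 ≤ cutW G w S' S'ᶜ)
    (hC3 : ∀ i j k : C, i ≠ j → j ≠ k → i ≠ k →
      G.Adj i j → G.Adj j k → ¬ G.Adj i k → w i j + w j k < 0)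
    (S : Finset C) (hS : S.Nonempty) (hT : Sᶜ.Nonempty)
    (hmin : ∀ S' : Finset C, S'.Nonempty → S'ᶜ.Nonempty →
      cutW G w S Sᶜ ≤ cutW G w S' S'ᶜ)
    (hedge : ∀ S' : Finset C, S'.Nonempty → S'ᶜ.Nonempty →
      cutW G w S' S'ᶜ = cutW G w S Sᶜ → nCross G S Sᶜ ≤ nCross G S' S'ᶜ) :
    (G.induce (↑(Sᶜ) : Set C)).Connected ∧
    (∀ A : Finset C, A ⊆ Sᶜ → A.Nonempty → (Sᶜ \ A).Nonempty →
      0 ≤ cutW G w A (Sᶜ \ A)) ∧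
    (∀ i j k : C, i ∈ Sᶜ → j ∈ Sᶜ → k ∈ Sᶜ → i ≠ j → j ≠ k → i ≠ k →
      G.Adj i j → G.Adj j k → ¬ G.Adj i k → w i j + w j k < 0) := by
  -- Common facts for a subset A ⊆ Sᶜ with B = Sᶜ \ A
  have key : ∀ A : Finset C, A ⊆ Sᶜ → A.Nonempty → (Sᶜ \ A).Nonempty →
      cutW G w S A ≤ cutW G w A (Sᶜ \ A) ∧ 0 ≤ cutW G w S A + cutW G w A (Sᶜ \ A) := by
    intro A hA hAne hBne
    set B := Sᶜ \ A with hB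
    have hdisjSA : Disjoint S A := by
      rw [Finset.disjoint_left]
      intro a haS haA
      exact (Finset.mem_compl.mp (hA haA)) haS
    have hdisjAB : Disjoint A B := Finset.disjoint_sdiff
    have hdisjSB : Disjoint S B := by
      rw [Finset.disjoint_left]
      intro a haS haB
      exact (Finset.mem_compl.mp ((Finset.sdiff_subset) haB)) haS
    have hTsplit : Sᶜ = A ∪ B := (Finset.union_sdiff_of_subset hA).symm
    have hcompl : (S ∪ A)ᶜ = B := by
      ext x
      simp only [Finset.mem_compl, Finset.mem_union, hB, Finset.mem_sdiff, Finset.mem_compl]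
      tauto
    have hAc : Aᶜ = S ∪ B := by
      ext x
      have := fun hx : x ∈ A => Finset.mem_compl.mp (hA hx)
      simp only [Finset.mem_compl, Finset.mem_union, hB, Finset.mem_sdiff, Finset.mem_compl]
      by_cases hxS : x ∈ S <;> by_cases hxA : x ∈ A <;> tauto
    have hSAne : (S ∪ A).Nonempty := hS.mono Finset.subset_union_left
    have h1 := hmin (S ∪ A) hSAne (by rw [hcompl]; exact hBne)
    rw [hcompl, cutW_union_left G w hdisjSA] at h1
    have h2 : cutW G w S Sᶜ = cutW G w S A + cutW G w S B := by
      rw [hTsplit, cutW_union_right G w hdisjAB]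
    have hAcne : Aᶜ.Nonempty := by
      rw [hAc]; exact hS.mono Finset.subset_union_left
    have h3 := hC2 A hAne hAcne
    rw [hAc, cutW_union_right G w hdisjSB] at h3
    have h4 : cutW G w A S = cutW G w S A := cutW_symm G w hw A S
    constructor <;> linarith
  refine ⟨?_, fun A hA hAne hBne => by have := key A hA hAne hBne; linarith [this.1, this.2], ?_⟩
  · -- Connectedness
    rw [SimpleGraph.connected_iff]
    obtain ⟨v0, hv0⟩ := hT
    refine ⟨?_, ⟨⟨v0, Finset.mem_coe.mpr hv0⟩⟩⟩
    intro u v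
    by_contra hne
    set T1 : Finset C := Sᶜ.filter
      (fun x => ∃ hx : x ∈ Sᶜ, (G.induce (↑(Sᶜ) : Set C)).Reachable u ⟨x, Finset.mem_coe.mpr hx⟩)
      with hT1
    set T2 : Finset C := Sᶜ \ T1 with hT2
    have hT1sub : T1 ⊆ Sᶜ := Finset.filter_subset _ _
    have hu1 : (u : C) ∈ T1 := by
      rw [hT1, Finset.mem_filter]
      exact ⟨Finset.mem_coe.mp u.2, Finset.mem_coe.mp u.2, SimpleGraph.Reachable.refl u⟩
    have hv2 : (v : C) ∈ T2 := by
      rw [hT2, Finset.mem_sdiff]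
      refine ⟨Finset.mem_coe.mp v.2, fun hvT1 => ?_⟩
      rw [hT1, Finset.mem_filter] at hvT1
      obtain ⟨_, _, hr⟩ := hvT1
      exact hne (by convert hr)
    have hno : ∀ i ∈ T1, ∀ j ∈ T2, ¬ G.Adj i j := by
      intro i hi j hj hadj
      rw [hT1, Finset.mem_filter] at hi
      obtain ⟨hiS, hiS', hr⟩ := hi
      rw [hT2, Finset.mem_sdiff] at hj
      obtain ⟨hjS, hjT1⟩ := hj
      have hadj' : (G.induce (↑(Sᶜ) : Set C)).Adj ⟨i, Finset.mem_coe.mpr hiS⟩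
          ⟨j, Finset.mem_coe.mpr hjS⟩ := by
        exact hadj
      exact hjT1 (by rw [hT1, Finset.mem_filter]
                     exact ⟨hjS, hjS, hr.trans hadj'.reachable⟩)
    have hT1ne : T1.Nonempty := ⟨u, hu1⟩
    have hT2ne : T2.Nonempty := ⟨v, hv2⟩
    -- cut computations
    obtain ⟨hle, hge⟩ := key T1 hT1sub hT1ne hT2ne
    have hzero : cutW G w T1 T2 = 0 := cutW_no_edge G w hno
    rw [hzero] at hle hge
    have hST1 : cutW G w S T1 = 0 := le_antisymm (by linarith) (by linarith)
    -- (S ∪ T1, T2) is also a min cut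
    have hdisjSA : Disjoint S T1 := by
      rw [Finset.disjoint_left]
      intro a haS haA
      exact (Finset.mem_compl.mp (hT1sub haA)) haS
    have hdisjAB : Disjoint T1 T2 := Finset.disjoint_sdiff
    have hTsplit : Sᶜ = T1 ∪ T2 := (Finset.union_sdiff_of_subset hT1sub).symm
    have hcompl : (S ∪ T1)ᶜ = T2 := by
      ext x
      simp only [Finset.mem_compl, Finset.mem_union, hT2, Finset.mem_sdiff, Finset.mem_compl]
      tauto
    have hSAne : (S ∪ T1).Nonempty := hS.mono Finset.subset_union_left
    have heq : cutW G w (S ∪ T1) (S ∪ T1)ᶜ = cutW G w S Sᶜ := by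
      rw [hcompl, cutW_union_left G w hdisjSA, hzero, hTsplit,
        cutW_union_right G w hdisjAB, hST1]
      ring
    have h5 := hedge (S ∪ T1) hSAne (by rw [hcompl]; exact hT2ne) heq
    rw [hcompl, nCross_union_left G hdisjSA, nCross_no_edge G hno] at h5
    have h6 : nCross G S Sᶜ = nCross G S T1 + nCross G S T2 := by
      rw [hTsplit, nCross_union_right G hdisjAB]
    have hn0 : nCross G S T1 = 0 := by omega
    have hnoS := nCross_eq_zero G hn0
    -- T1 has no edges leaving it: contradiction with connectedness
    have hT1cne : T1ᶜ.Nonempty := by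
      obtain ⟨s, hs⟩ := hS
      exact ⟨s, Finset.mem_compl.mpr fun h => (Finset.mem_compl.mp (hT1sub h)) hs⟩
    obtain ⟨i, hi, j, hj, hadj⟩ := exists_cross G hC1 hT1ne hT1cne
    by_cases hjS : j ∈ S
    · exact hnoS j hjS i hi hadj.symm
    · have hjT2 : j ∈ T2 := by
        rw [hT2, Finset.mem_sdiff]
        exact ⟨Finset.mem_compl.mpr hjS, hj⟩
      exact hno i hi j hjT2 hadj
  · intro i j k _ _ _ hij hjk hik hadj1 hadj2 hnadj
    exact hC3 i j k hij hjk hik hadj1 hadj2 hnadj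
end

section
/- Let G = (C,F) be a finite weighted graph satisfying (C2) and (C3), let (S,T) be a cut of G such that the induced subgraph on T is a complete graph and satisfies (C2). If s ∈ S is adjacent to at least one but not all vertices of T, then w({s},T) < 0, i.e., the total weight of edges from s to T is negative. -/
open Finset
open scoped Classical

/-- Claim 2: Suppose `G = (C,F)` with weights `w` satisfies (C2) and (C3),
`(S, Sᶜ)` is a cut such that the induced subgraph on `T = Sᶜ` is complete and
satisfies (C2). If `s ∈ S` is adjacent to at least one but not all vertices of `T`,
then the total weight of the edges from `s` to `T` is negative. -/
theorem partial_neighbor_weight_neg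
    {C : Type*} [Fintype C] [DecidableEq C]
    (G : SimpleGraph C) (w : C → C → ℝ)
    (hw : ∀ i j : C, w i j = w j i)
    (hC2 : ∀ S' : Finset C, S'.Nonempty → S'ᶜ.Nonempty →
      0 ≤ ∑ i ∈ S', ∑ j ∈ S'ᶜ, if G.Adj i j then w i j else 0)
    (hC3 : ∀ i j k : C, i ≠ j → j ≠ k → i ≠ k →
      G.Adj i j → G.Adj j k → ¬ G.Adj i k → w i j + w j k < 0)
    (S : Finset C) (hS : S.Nonempty) (hT : Sᶜ.Nonempty)
    (hTcomplete : ∀ t ∈ Sᶜ, ∀ u ∈ Sᶜ, t ≠ u → G.Adj t u)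
    (hTC2 : ∀ A : Finset C, A ⊆ Sᶜ → A.Nonempty → (Sᶜ \ A).Nonempty →
      0 ≤ ∑ i ∈ A, ∑ j ∈ Sᶜ \ A, if G.Adj i j then w i j else 0)
    (s : C) (hs : s ∈ S)
    (hsome : 0 < (Sᶜ.filter (fun u => G.Adj s u)).card)
    (hnotall : (Sᶜ.filter (fun u => G.Adj s u)).card < Sᶜ.card) :
    (∑ u ∈ Sᶜ, if G.Adj s u then w s u else 0) < 0 := by
  set N : Finset C := Sᶜ.filter (fun u => G.Adj s u) with hN
  set M : Finset C := Sᶜ \ N with hM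
  have hNsub : N ⊆ Sᶜ := filter_subset _ _
  have hNne : N.Nonempty := card_pos.mp hsome
  have hMne : M.Nonempty := by
    apply card_pos.mp
    rw [hM, card_sdiff_of_subset hNsub]
    omega
  have hsS : s ∉ Sᶜ := by simp [hs]
  -- each pair term is negative
  have hpair : ∀ a ∈ N, ∀ b ∈ M, w s a + w a b < 0 := by
    intro a ha b hb
    have haT : a ∈ Sᶜ := hNsub ha
    have hadj : G.Adj s a := (mem_filter.mp ha).2
    have hbT : b ∈ Sᶜ := (mem_sdiff.mp hb).1
    have hbN : b ∉ N := (mem_sdiff.mp hb).2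
    have hnadj : ¬ G.Adj s b := fun h => hbN (mem_filter.mpr ⟨hbT, h⟩)
    have hab : a ≠ b := fun h => hbN (h ▸ ha)
    have hsa : s ≠ a := fun h => hsS (h ▸ haT)
    have hsb : s ≠ b := fun h => hsS (h ▸ hbT)
    exact hC3 s a b hsa hab hsb hadj (hTcomplete a haT b hbT hab) hnadj
  have hsumneg : ∑ a ∈ N, ∑ b ∈ M, (w s a + w a b) < 0 := by
    have : ∀ a ∈ N, ∑ b ∈ M, (w s a + w a b) < 0 := fun a ha =>
      Finset.sum_neg (fun b hb => hpair a ha b hb) hMne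
    calc ∑ a ∈ N, ∑ b ∈ M, (w s a + w a b) < ∑ a ∈ N, (0:ℝ) :=
          Finset.sum_lt_sum_of_nonempty hNne this
      _ = 0 := by simp
  have hcut : 0 ≤ ∑ a ∈ N, ∑ b ∈ M, w a b := by
    have h := hTC2 N hNsub hNne hMne
    have heq : ∑ a ∈ N, ∑ b ∈ M, (if G.Adj a b then w a b else 0)
        = ∑ a ∈ N, ∑ b ∈ M, w a b := by
      apply Finset.sum_congr rfl
      intro a ha
      apply Finset.sum_congr rfl
      intro b hb
      have hab : a ≠ b := fun h => (mem_sdiff.mp hb).2 (h ▸ ha)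
      rw [if_pos (hTcomplete a (hNsub ha) b (mem_sdiff.mp hb).1 hab)]
    rw [← heq]; exact h
  have hsplit : ∑ a ∈ N, ∑ b ∈ M, (w s a + w a b)
      = (M.card : ℝ) * ∑ a ∈ N, w s a + ∑ a ∈ N, ∑ b ∈ M, w a b := by
    rw [Finset.mul_sum]
    rw [← Finset.sum_add_distrib]
    apply Finset.sum_congr rfl
    intro a _
    rw [Finset.sum_add_distrib, Finset.sum_const, nsmul_eq_mul, mul_comm]
  have hkey : (M.card : ℝ) * ∑ a ∈ N, w s a < 0 := by
    have := hsumneg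
    rw [hsplit] at this
    linarith
  have hMpos : (0:ℝ) < M.card := by exact_mod_cast card_pos.mpr hMne
  have hNneg : ∑ a ∈ N, w s a < 0 := by
    by_contra h
    push_neg at h
    nlinarith
  calc (∑ u ∈ Sᶜ, if G.Adj s u then w s u else 0) = ∑ a ∈ N, w s a := by
        rw [hN, Finset.sum_filter]
    _ < 0 := hNneg
end

section
/- Let G = (C,F) be a finite weighted graph satisfying (C1), (C2), (C3), and let p, q ∈ C be two distinct vertices each adjacent to every other vertex of C. Then the graph G' obtained by contracting p and q into a single vertex pq, with edge weights w'(pq, j) = w(p,j) + w(q,j) and w'(i,j) = w(i,j) for i,j ∉ {p,q}, also satisfies (C1), (C2), and (C3). -/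
open Finset
open scoped Classical

/-- Claim 3: Let `G = (C,F)` with weights `w` satisfy (C1), (C2), (C3), and let
`p, q` be two distinct vertices each adjacent to every other vertex. Contract `p`
and `q` into a single vertex `pq` (modelled on the vertex type `{v : C // v ≠ q}`,
where the subtype copy of `p` plays the role of `pq`): the contracted vertex is
adjacent to every other vertex, other adjacencies are inherited, and the weights
are `w'(pq, j) = w(p,j) + w(q,j)` and `w'(i,j) = w(i,j)` otherwise. Then the
contracted weighted graph also satisfies (C1), (C2) and (C3). -/
theorem contraction_preserves_C1_C2_C3
    {C : Type*} [Fintype C] [DecidableEq C]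
    (G : SimpleGraph C) (w : C → C → ℝ)
    (hw : ∀ i j : C, w i j = w j i)
    (p q : C) (hpq : p ≠ q) (hcard : 3 ≤ Fintype.card C)
    (hp : ∀ v : C, v ≠ p → G.Adj p v)
    (hq : ∀ v : C, v ≠ q → G.Adj q v)
    (hC1 : G.Connected)
    (hC2 : ∀ S : Finset C, S.Nonempty → Sᶜ.Nonempty →
      0 ≤ ∑ i ∈ S, ∑ j ∈ Sᶜ, if G.Adj i j then w i j else 0)
    (hC3 : ∀ i j k : C, i ≠ j → j ≠ k → i ≠ k →
      G.Adj i j → G.Adj j k → ¬ G.Adj i k → w i j + w j k < 0)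
    (G' : SimpleGraph {v : C // v ≠ q})
    (hG' : ∀ a b : {v : C // v ≠ q},
      G'.Adj a b ↔ (a ≠ b ∧ ((a : C) = p ∨ (b : C) = p ∨ G.Adj (a : C) (b : C))))
    (w' : {v : C // v ≠ q} → {v : C // v ≠ q} → ℝ)
    (hw' : ∀ a b : {v : C // v ≠ q},
      w' a b = if (a : C) = p then w p (b : C) + w q (b : C)
               else if (b : C) = p then w (a : C) p + w (a : C) q
               else w (a : C) (b : C)) :
    G'.Connected ∧
    (∀ S' : Finset {v : C // v ≠ q}, S'.Nonempty → S'ᶜ.Nonempty →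
      0 ≤ ∑ a ∈ S', ∑ b ∈ S'ᶜ, if G'.Adj a b then w' a b else 0) ∧
    (∀ a b c : {v : C // v ≠ q}, a ≠ b → b ≠ c → a ≠ c →
      G'.Adj a b → G'.Adj b c → ¬ G'.Adj a c → w' a b + w' b c < 0) := by
  classical
  set pq : {v : C // v ≠ q} := ⟨p, hpq⟩ with hpqdef
  have hne_pq : ∀ a : {v : C // v ≠ q}, a ≠ pq ↔ (a : C) ≠ p := by
    intro a
    constructor
    · intro h hp'
      exact h (Subtype.ext hp')
    · intro h h'
      exact h (by rw [h'])
  have hadjpq : ∀ a : {v : C // v ≠ q}, a ≠ pq → G'.Adj pq a := by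
    intro a ha
    rw [hG']
    exact ⟨fun h => ha h.symm, Or.inl rfl⟩
  refine ⟨?_, ?_, ?_⟩
  · -- C1
    have hne : Nonempty {v : C // v ≠ q} := ⟨pq⟩
    refine ⟨fun a b => ?_⟩
    have h1 : ∀ c : {v : C // v ≠ q}, G'.Reachable pq c := by
      intro c
      by_cases hc : c = pq
      · rw [hc]
      · exact (hadjpq c hc).reachable
    exact (h1 a).symm.trans (h1 b)
  · -- C2
    intro S' hS' hS'c
    set π : C → {v : C // v ≠ q} := fun j => if h : j = q then pq else ⟨j, h⟩ with hπ
    set fiber : {v : C // v ≠ q} → Finset C :=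
      fun a => Finset.univ.filter (fun j => π j = a) with hfiber
    have mem_fiber : ∀ (j : C) (a : {v : C // v ≠ q}), j ∈ fiber a ↔ π j = a := by
      intro j a; simp [hfiber]
    have πval : ∀ a : {v : C // v ≠ q}, π (a : C) = a := by
      intro a
      simp only [hπ, dif_neg a.prop]
    have fiber_eq : ∀ a : {v : C // v ≠ q},
        fiber a = if a = pq then ({p, q} : Finset C) else {(a : C)} := by
      intro a
      ext j
      rw [mem_fiber]
      by_cases ha : a = pq
      · subst ha
        rw [if_pos rfl]
        simp only [Finset.mem_insert, Finset.mem_singleton]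
        by_cases hj : j = q
        · simp [hπ, hj]
        · simp only [hπ, dif_neg hj]
          constructor
          · intro h
            exact Or.inl (congrArg Subtype.val h)
          · rintro (h | h)
            · exact Subtype.ext h
            · exact absurd h hj
      · simp only [if_neg ha, Finset.mem_singleton]
        by_cases hj : j = q
        · subst hj
          simp only [hπ, dif_pos rfl]
          constructor
          · intro h; exact absurd h.symm ha
          · intro h; exact absurd h.symm a.prop
        · simp only [hπ, dif_neg hj]
          constructor
          · intro h; exact congrArg Subtype.val h
          · intro h; exact Subtype.ext h
    have mem_bi : ∀ (T : Finset {v : C // v ≠ q}) (j : C),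
        j ∈ T.biUnion fiber ↔ π j ∈ T := by
      intro T j
      simp only [Finset.mem_biUnion]
      constructor
      · rintro ⟨a, haT, hja⟩
        rw [mem_fiber] at hja
        rwa [hja]
      · intro h
        exact ⟨π j, h, (mem_fiber j (π j)).2 rfl⟩
    have hdisj : ∀ (T : Finset {v : C // v ≠ q}),
        Set.PairwiseDisjoint (T : Set {v : C // v ≠ q}) fiber := by
      intro T a _ b _ hab
      refine Finset.disjoint_left.2 fun j hja hjb => hab ?_
      rw [mem_fiber] at hja hjb
      rw [← hja, hjb]
    set S : Finset C := S'.biUnion fiber with hS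
    have hSc : Sᶜ = S'ᶜ.biUnion fiber := by
      ext j
      simp only [Finset.mem_compl, hS, mem_bi]
    have key : ∀ a ∈ S', ∀ b ∈ S'ᶜ,
        (∑ i ∈ fiber a, ∑ j ∈ fiber b, (if G.Adj i j then w i j else 0))
          = (if G'.Adj a b then w' a b else 0) := by
      intro a haS b hbS
      have hab : a ≠ b := fun h => (Finset.mem_compl.1 hbS) (h ▸ haS)
      by_cases ha : a = pq
      · subst ha
        have hb : b ≠ pq := fun h => hab h.symm
        have hbp : (b : C) ≠ p := (hne_pq b).1 hb
        rw [fiber_eq, fiber_eq, if_pos rfl, if_neg hb]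
        rw [Finset.sum_pair hpq]
        simp only [Finset.sum_singleton]
        have h1 : G.Adj p (b : C) := hp _ hbp
        have h2 : G.Adj q (b : C) := hq _ b.prop
        have hadj : G'.Adj pq b := hadjpq b hb
        rw [if_pos h1, if_pos h2, if_pos hadj, hw']
        simp [hpqdef]
      · by_cases hb : b = pq
        · subst hb
          have hap : (a : C) ≠ p := (hne_pq a).1 ha
          rw [fiber_eq, fiber_eq, if_neg ha, if_pos rfl]
          rw [Finset.sum_singleton, Finset.sum_pair hpq]
          have h1 : G.Adj (a : C) p := (hp _ hap).symm
          have h2 : G.Adj (a : C) q := (hq _ a.prop).symm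
          have hadj : G'.Adj a pq := (hadjpq a ha).symm
          rw [if_pos h1, if_pos h2, if_pos hadj, hw']
          simp [hap, hpqdef]
        · have hap : (a : C) ≠ p := (hne_pq a).1 ha
          have hbp : (b : C) ≠ p := (hne_pq b).1 hb
          rw [fiber_eq, fiber_eq, if_neg ha, if_neg hb,
            Finset.sum_singleton, Finset.sum_singleton]
          have hadj : G'.Adj a b ↔ G.Adj (a : C) (b : C) := by
            rw [hG']
            constructor
            · rintro ⟨-, (h | h | h)⟩
              · exact absurd h hap
              · exact absurd h hbp
              · exact h
            · intro h
              exact ⟨hab, Or.inr (Or.inr h)⟩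
          have hww : w' a b = w (a : C) (b : C) := by
            rw [hw', if_neg hap, if_neg hbp]
          by_cases h : G.Adj (a : C) (b : C)
          · rw [if_pos h, if_pos (hadj.2 h), hww]
          · rw [if_neg h, if_neg (fun h' => h (hadj.1 h'))]
    have hSne : S.Nonempty := by
      obtain ⟨a, ha⟩ := hS'
      exact ⟨(a : C), (mem_bi S' (a : C)).2 (by rw [πval]; exact ha)⟩
    have hScne : Sᶜ.Nonempty := by
      obtain ⟨b, hb⟩ := hS'c
      refine ⟨(b : C), ?_⟩
      rw [hSc]
      exact (mem_bi S'ᶜ (b : C)).2 (by rw [πval]; exact hb)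
    have h0 := hC2 S hSne hScne
    calc (0 : ℝ) ≤ ∑ i ∈ S, ∑ j ∈ Sᶜ, (if G.Adj i j then w i j else 0) := h0
      _ = ∑ a ∈ S', ∑ i ∈ fiber a, ∑ j ∈ Sᶜ, (if G.Adj i j then w i j else 0) := by
          rw [hS, Finset.sum_biUnion (hdisj S')]
      _ = ∑ a ∈ S', ∑ i ∈ fiber a, ∑ b ∈ S'ᶜ, ∑ j ∈ fiber b,
            (if G.Adj i j then w i j else 0) := by
          refine Finset.sum_congr rfl fun a _ => Finset.sum_congr rfl fun i _ => ?_
          rw [hSc, Finset.sum_biUnion (hdisj S'ᶜ)]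
      _ = ∑ a ∈ S', ∑ b ∈ S'ᶜ, ∑ i ∈ fiber a, ∑ j ∈ fiber b,
            (if G.Adj i j then w i j else 0) := by
          refine Finset.sum_congr rfl fun a _ => ?_
          rw [Finset.sum_comm]
      _ = ∑ a ∈ S', ∑ b ∈ S'ᶜ, (if G'.Adj a b then w' a b else 0) := by
          refine Finset.sum_congr rfl fun a ha => Finset.sum_congr rfl fun b hb => ?_
          exact key a ha b hb
  · -- C3
    intro a b c hab hbc hac hadjab hadjbc hnadjac
    have hac' : (a : C) ≠ (c : C) := fun h => hac (Subtype.ext h)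
    rw [hG'] at hnadjac
    push_neg at hnadjac
    obtain ⟨hap, hcp, hnac⟩ := hnadjac hac
    by_cases hbpq : b = pq
    · subst hbpq
      have hap' : (a : C) ≠ p := hap
      have h1 : w (a : C) p + w p (c : C) < 0 :=
        hC3 (a : C) p (c : C) hap' (Ne.symm hcp) hac'
          ((hp _ hap').symm) (hp _ hcp) hnac
      have h2 : w (a : C) q + w q (c : C) < 0 :=
        hC3 (a : C) q (c : C) a.prop (Ne.symm c.prop) hac'
          ((hq _ a.prop).symm) (hq _ c.prop) hnac
      have hppq : ((pq : {v : C // v ≠ q}) : C) = p := rfl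
      rw [hw' a pq, hw' pq c, if_neg hap, if_pos hppq, if_pos hppq]
      linarith
    · have hbp : (b : C) ≠ p := (hne_pq b).1 hbpq
      have hab' : (a : C) ≠ (b : C) := fun h => hab (Subtype.ext h)
      have hbc' : (b : C) ≠ (c : C) := fun h => hbc (Subtype.ext h)
      have g1 : G.Adj (a : C) (b : C) := by
        rw [hG'] at hadjab
        rcases hadjab.2 with h | h | h
        · exact absurd h hap
        · exact absurd h hbp
        · exact h
      have g2 : G.Adj (b : C) (c : C) := by
        rw [hG'] at hadjbc
        rcases hadjbc.2 with h | h | h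
        · exact absurd h hbp
        · exact absurd h hcp
        · exact h
      have h3 := hC3 (a : C) (b : C) (c : C) hab' hbc' hac' g1 g2 hnac
      rw [hw' a b, hw' b c, if_neg hap, if_neg hbp, if_neg hbp, if_neg hcp]
      exact h3
end

section
/- Let G = (C,F) be a connected finite weighted graph in which every cut has nonnegative weight, and suppose the induced subgraphs on both parts S and T of a cut are complete. If every vertex s ∈ S adjacent to T satisfies |δ({s},T)| < |T| implies w({s},T) < 0, and w(S,T) ≥ 0, then there exists a vertex p ∈ S adjacent to every vertex of T (and hence to every other vertex of C). -/
open Finset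
open scoped Classical

/-- If `G` is connected with every cut of nonnegative weight, the induced subgraphs
on both parts `S` and `T = Sᶜ` of a cut are complete, every `s ∈ S` adjacent to `T`
but not to all of `T` has negative total edge weight towards `T`, and `w(S,T) ≥ 0`,
then there is a vertex `p ∈ S` adjacent to every vertex of `T` (and hence to every
other vertex of `C`). -/
theorem exists_fully_adjacent_vertex
    {C : Type*} [Fintype C] [DecidableEq C]
    (G : SimpleGraph C) (w : C → C → ℝ)
    (hw : ∀ i j : C, w i j = w j i)
    (hC1 : G.Connected)
    (hC2 : ∀ S' : Finset C, S'.Nonempty → S'ᶜ.Nonempty →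
      0 ≤ ∑ i ∈ S', ∑ j ∈ S'ᶜ, if G.Adj i j then w i j else 0)
    (S : Finset C) (hS : S.Nonempty) (hT : Sᶜ.Nonempty)
    (hScomplete : ∀ s ∈ S, ∀ t ∈ S, s ≠ t → G.Adj s t)
    (hTcomplete : ∀ s ∈ Sᶜ, ∀ t ∈ Sᶜ, s ≠ t → G.Adj s t)
    (hneg : ∀ s ∈ S, 0 < (Sᶜ.filter (fun u => G.Adj s u)).card →
      (Sᶜ.filter (fun u => G.Adj s u)).card < Sᶜ.card →
      (∑ u ∈ Sᶜ.filter (fun u => G.Adj s u), w s u) < 0)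
    (hcut : 0 ≤ ∑ i ∈ S, ∑ j ∈ Sᶜ, if G.Adj i j then w i j else 0) :
    ∃ p ∈ S, (∀ t ∈ Sᶜ, G.Adj p t) ∧ (∀ v : C, v ≠ p → G.Adj p v) := by
  by_cases hp : ∃ p ∈ S, ∀ t ∈ Sᶜ, G.Adj p t
  · obtain ⟨p, hpS, hpt⟩ := hp
    refine ⟨p, hpS, hpt, fun v hv => ?_⟩
    by_cases hvS : v ∈ S
    · exact hScomplete p hpS v hvS (Ne.symm hv)
    · exact hpt v (Finset.mem_compl.mpr hvS)
  · exfalso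
    push_neg at hp
    -- connectivity gives an edge from S to Sᶜ
    obtain ⟨s0, hs0⟩ := hS
    obtain ⟨t0, ht0⟩ := hT
    obtain ⟨walk⟩ := hC1.preconnected s0 t0
    obtain ⟨d, _, hd1, hd2⟩ := walk.exists_boundary_dart (↑S : Set C)
      (by exact_mod_cast hs0) (by simpa using Finset.mem_compl.mp ht0)
    have hadj : G.Adj d.fst d.snd := d.adj
    have hfstS : d.fst ∈ S := by exact_mod_cast hd1
    have hsndT : d.snd ∈ Sᶜ := Finset.mem_compl.mpr (by exact_mod_cast hd2)
    -- for each s ∈ S, inner sum equals sum over adjacent vertices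
    have hsum : ∀ s : C, (∑ j ∈ Sᶜ, if G.Adj s j then w s j else 0)
        = ∑ u ∈ Sᶜ.filter (fun u => G.Adj s u), w s u := by
      intro s
      rw [Finset.sum_filter]
    have hcardlt : ∀ s ∈ S, (Sᶜ.filter (fun u => G.Adj s u)).card < Sᶜ.card := by
      intro s hsS
      obtain ⟨t, htT, htadj⟩ := hp s hsS
      apply Finset.card_lt_card
      refine ⟨Finset.filter_subset _ _, fun hsub => htadj ?_⟩
      exact (Finset.mem_filter.mp (hsub htT)).2
    have hle : ∀ s ∈ S, (∑ j ∈ Sᶜ, if G.Adj s j then w s j else 0) ≤ 0 := by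
      intro s hsS
      rw [hsum]
      rcases Nat.eq_zero_or_pos (Sᶜ.filter (fun u => G.Adj s u)).card with h0 | h0
      · rw [Finset.card_eq_zero.mp h0, Finset.sum_empty]
      · exact le_of_lt (hneg s hsS h0 (hcardlt s hsS))
    have hlt : (∑ j ∈ Sᶜ, if G.Adj d.fst j then w d.fst j else 0) < 0 := by
      rw [hsum]
      refine hneg d.fst hfstS ?_ (hcardlt d.fst hfstS)
      exact Finset.card_pos.mpr ⟨d.snd, Finset.mem_filter.mpr ⟨hsndT, hadj⟩⟩
    have : (∑ i ∈ S, ∑ j ∈ Sᶜ, if G.Adj i j then w i j else 0) < 0 := by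
      calc (∑ i ∈ S, ∑ j ∈ Sᶜ, if G.Adj i j then w i j else 0)
          < ∑ _i ∈ S, (0 : ℝ) :=
            Finset.sum_lt_sum (fun i hi => hle i hi) ⟨d.fst, hfstS, hlt⟩
        _ = 0 := by simp
    linarith
end

section
/- Let x be a 0-1 vector indexed by unordered pairs of distinct vertices of a finite set V that satisfies the transitivity constraint x_{ij} + x_{jk} ≤ 1 + x_{ik} for all triples of distinct i,j,k ∈ V (under all index orderings). Then the edge set X = { {i,j} : x_{ij} = 1 } is a clique partitioning: every connected component of the graph (V, X) is a complete subgraph. -/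
open scoped Classical

/-- If a symmetric 0-1 vector `x` on unordered pairs of distinct vertices satisfies
all transitivity constraints `x_{ij} + x_{jk} ≤ 1 + x_{ik}`, then the edge set
`X = { {i,j} : x_{ij} = 1 }` is a clique partitioning: every connected component of
the graph `(V, X)` is a complete subgraph (any two distinct vertices in the same
component are adjacent). -/
theorem transitivity_gives_clique_partitioning
    {V : Type*} [Fintype V] [DecidableEq V]
    (x : Sym2 V → ℝ)
    (hbin : ∀ e : Sym2 V, x e = 0 ∨ x e = 1)
    (htrans : ∀ i j k : V, i ≠ j → j ≠ k → i ≠ k →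
      x s(i, j) + x s(j, k) ≤ 1 + x s(i, k))
    (Gx : SimpleGraph V)
    (hGx : ∀ i j : V, Gx.Adj i j ↔ (i ≠ j ∧ x s(i, j) = 1)) :
    ∀ i j : V, i ≠ j → Gx.Reachable i j → Gx.Adj i j := by
  have tadj : ∀ a b c : V, Gx.Adj a b → Gx.Adj b c → a ≠ c → Gx.Adj a c := by
    intro a b c hab hbc hac
    rw [hGx] at hab hbc ⊢
    refine ⟨hac, ?_⟩
    have h := htrans a b c hab.1 hbc.1 hac
    rw [hab.2, hbc.2] at h
    rcases hbin s(a, c) with h0 | h1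
    · rw [h0] at h; linarith
    · exact h1
  have key : ∀ i j : V, Gx.Walk i j → i = j ∨ Gx.Adj i j := by
    intro i j p
    induction p with
    | nil => exact Or.inl rfl
    | @cons a b c h p ih =>
      rcases ih with rfl | hadj
      · exact Or.inr h
      · by_cases hij : a = c
        · exact Or.inl hij
        · exact Or.inr (tadj _ _ _ h hadj hij)
  intro i j hij hr
  rcases hr with ⟨p⟩
  rcases key i j p with rfl | h
  · exact absurd rfl hij
  · exact h
end

section
/- The set of optimal solutions of the integer program (FRP) — maximize Σ_{i<j} w_{ij} x_{ij} over x ∈ {0,1}^{E} subject to transitivity constraints x_{ij} + x_{jk} ≤ 1 + x_{ik} only for triples of distinct i,j,k with w_{ij} + w_{jk} ≥ 0 — coincides with the set of optimal solutions of the full program (P), which imposes the transitivity constraints for all triples of distinct vertices. -/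
open Finset
open scoped Classical

/-- Objective value `∑_{{i,j} ∈ E} w_{ij} x_{ij}`, summing over unordered pairs of
distinct vertices. -/
noncomputable def objVal {V : Type*} [Fintype V] [DecidableEq V]
    (w x : Sym2 V → ℝ) : ℝ :=
  ∑ e ∈ Finset.univ.filter (fun e : Sym2 V => ¬ e.IsDiag), w e * x e

/-- `x` is a 0-1 vector. -/
def IsBinary {V : Type*} (x : Sym2 V → ℝ) : Prop :=
  ∀ e : Sym2 V, x e = 0 ∨ x e = 1

/-- Feasibility for the full program (P): all transitivity constraints. -/
def FeasP {V : Type*} (x : Sym2 V → ℝ) : Prop :=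
  IsBinary x ∧ ∀ i j k : V, i ≠ j → j ≠ k → i ≠ k →
    x s(i, j) + x s(j, k) ≤ 1 + x s(i, k)

/-- Feasibility for (FRP): transitivity constraints only when `w_{ij}+w_{jk} ≥ 0`. -/
def FeasFRP {V : Type*} (w x : Sym2 V → ℝ) : Prop :=
  IsBinary x ∧ ∀ i j k : V, i ≠ j → j ≠ k → i ≠ k →
    0 ≤ w s(i, j) + w s(j, k) →
    x s(i, j) + x s(j, k) ≤ 1 + x s(i, k)

section Helpers

variable {V : Type*} [Fintype V] [DecidableEq V]

lemma sum_pairs (g : Sym2 V → ℝ) :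
    ∑ a : V, ∑ b : V, (if a ≠ b then g s(a, b) else 0)
      = 2 * ∑ e ∈ Finset.univ.filter (fun e : Sym2 V => ¬ e.IsDiag), g e := by
  classical
  set P2 : Finset (V × V) :=
    (Finset.univ ×ˢ Finset.univ).filter (fun p : V × V => p.1 ≠ p.2) with hP2
  have h1 : ∑ a : V, ∑ b : V, (if a ≠ b then g s(a, b) else 0)
      = ∑ p ∈ P2, g (Sym2.mk p.1 p.2) := by
    rw [hP2, Finset.sum_filter, Finset.sum_product]
  have hmap : ∀ p ∈ P2, Sym2.mk p.1 p.2 ∈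
      Finset.univ.filter (fun e : Sym2 V => ¬ e.IsDiag) := by
    rintro ⟨a, b⟩ hp
    simp only [hP2, Finset.mem_filter, Finset.mem_product] at hp
    simp only [Finset.mem_filter, Finset.mem_univ, true_and]
    exact fun hd => hp.2 (Sym2.mk_isDiag_iff.mp hd)
  have h3 := Finset.sum_fiberwise_of_maps_to hmap (fun p => g (Sym2.mk p.1 p.2))
  have h4 : ∀ e ∈ Finset.univ.filter (fun e : Sym2 V => ¬ e.IsDiag),
      (∑ p ∈ P2.filter (fun p => Sym2.mk p.1 p.2 = e), g (Sym2.mk p.1 p.2)) = 2 * g e := by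
    intro e he
    induction e using Sym2.ind with
    | _ a b =>
      simp only [Finset.mem_filter, Finset.mem_univ, true_and] at he
      have hab : a ≠ b := fun h => he (Sym2.mk_isDiag_iff.mpr h)
      have hfib : P2.filter (fun p => Sym2.mk p.1 p.2 = s(a, b))
          = ({(a, b), (b, a)} : Finset (V × V)) := by
        apply Finset.ext
        rintro ⟨c, d⟩
        simp only [hP2, Finset.mem_filter, Finset.mem_product, Finset.mem_univ,
          true_and, Finset.mem_insert, Finset.mem_singleton, Prod.mk.injEq]
        constructor
        · rintro ⟨hcd, h⟩
          rcases Sym2.eq_iff.mp h with ⟨rfl, rfl⟩ | ⟨rfl, rfl⟩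
          · exact Or.inl ⟨rfl, rfl⟩
          · exact Or.inr ⟨rfl, rfl⟩
        · rintro (⟨rfl, rfl⟩ | ⟨rfl, rfl⟩)
          · exact ⟨hab, rfl⟩
          · exact ⟨fun h => hab h.symm, Sym2.eq_swap⟩
      rw [hfib]
      rw [Finset.sum_pair (by
        intro h
        exact hab (by simpa using congrArg Prod.fst h))]
      have hswap : g (Sym2.mk b a) = g (Sym2.mk a b) := by
        congr 1
        exact Sym2.eq_swap
      rw [hswap]
      ring
  calc ∑ a : V, ∑ b : V, (if a ≠ b then g s(a, b) else 0)
      = ∑ p ∈ P2, g (Sym2.mk p.1 p.2) := h1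
    _ = ∑ e ∈ Finset.univ.filter (fun e : Sym2 V => ¬ e.IsDiag),
          ∑ p ∈ P2.filter (fun p => Sym2.mk p.1 p.2 = e), g (Sym2.mk p.1 p.2) := h3.symm
    _ = ∑ e ∈ Finset.univ.filter (fun e : Sym2 V => ¬ e.IsDiag), 2 * g e :=
          Finset.sum_congr rfl h4
    _ = 2 * ∑ e ∈ Finset.univ.filter (fun e : Sym2 V => ¬ e.IsDiag), g e := by
          rw [Finset.mul_sum]

end Helpers

section Key

variable {V : Type*} [Fintype V] [DecidableEq V]

/-- The cherry condition: `a-b` and `b-c` are 1-edges while `a,c` is a 0-pair. -/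
def Cherry (x : Sym2 V → ℝ) (a b c : V) : Prop :=
  a ≠ b ∧ b ≠ c ∧ a ≠ c ∧ x s(a, b) = 1 ∧ x s(b, c) = 1 ∧ x s(a, c) = 0

/-- Weight contribution of an ordered triple. -/
noncomputable def hW (w x : Sym2 V → ℝ) (a b c : V) : ℝ :=
  if Cherry x a b c then w s(a, b) else 0

/-- Membership in the closed neighborhood of `k`. -/
def nbr (x : Sym2 V → ℝ) (k v : V) : Prop := v = k ∨ x s(v, k) = 1

/-- An edge crosses the cut around the closed neighborhood of `k`. -/
def crossP (x : Sym2 V → ℝ) (k : V) (e : Sym2 V) : Prop :=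
  ∃ a b, e = s(a, b) ∧ nbr x k a ∧ ¬ nbr x k b

/-- Weight of the cut around the closed neighborhood of `k`. -/
noncomputable def cutv (w x : Sym2 V → ℝ) (k : V) : ℝ :=
  ∑ e ∈ Finset.univ.filter (fun e : Sym2 V => ¬ e.IsDiag),
    (if crossP x k e then w e * x e else 0)

lemma crossP_iff (x : Sym2 V → ℝ) (k a b : V) :
    crossP x k s(a, b) ↔ ((nbr x k a ∧ ¬ nbr x k b) ∨ (nbr x k b ∧ ¬ nbr x k a)) := by
  constructor
  · rintro ⟨c, d, he, hc, hd⟩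
    rcases Sym2.eq_iff.mp he with ⟨rfl, rfl⟩ | ⟨rfl, rfl⟩
    · exact Or.inl ⟨hc, hd⟩
    · exact Or.inr ⟨hc, hd⟩
  · rintro (⟨u1, u2⟩ | ⟨u1, u2⟩)
    · exact ⟨a, b, rfl, u1, u2⟩
    · exact ⟨b, a, Sym2.eq_swap, u1, u2⟩

lemma cherry_symm (x : Sym2 V → ℝ) (a b c : V) :
    Cherry x a b c ↔ Cherry x c b a := by
  unfold Cherry
  rw [show (s(c, b) : Sym2 V) = s(b, c) from Sym2.eq_swap,
      show (s(b, a) : Sym2 V) = s(a, b) from Sym2.eq_swap,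
      show (s(c, a) : Sym2 V) = s(a, c) from Sym2.eq_swap]
  constructor
  · rintro ⟨u1, u2, u3, v1, v2, v3⟩; exact ⟨u2.symm, u1.symm, u3.symm, v2, v1, v3⟩
  · rintro ⟨u1, u2, u3, v1, v2, v3⟩; exact ⟨u2.symm, u1.symm, u3.symm, v2, v1, v3⟩

/-- Pointwise identity: crossing contribution = two ordered cherry terms. -/
lemma cross_point (w x : Sym2 V → ℝ) (hB : IsBinary x) (k a b : V) (hab : a ≠ b) :
    (if crossP x k s(a, b) then w s(a, b) * x s(a, b) else 0) = hW w x a b k + hW w x b a k := by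
  classical
  have hswx : x s(b, a) = x s(a, b) := by rw [Sym2.eq_swap]
  have hsww : w s(b, a) = w s(a, b) := by rw [Sym2.eq_swap]
  unfold hW
  by_cases hc : crossP x k s(a, b)
  · rw [if_pos hc]
    rcases hB s(a, b) with hab0 | hab1
    · rw [if_neg (by rintro ⟨-, -, -, e1, -, -⟩; rw [hab0] at e1; norm_num at e1),
        if_neg (by rintro ⟨-, -, -, e1, -, -⟩; rw [hswx, hab0] at e1; norm_num at e1),
        hab0]
      ring
    · rcases (crossP_iff x k a b).mp hc with ⟨u1, u2⟩ | ⟨u1, u2⟩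
      · -- a in S, b out
        have hbk : b ≠ k := fun hh => u2 (Or.inl hh)
        have hbk0 : x s(b, k) = 0 := by
          rcases hB s(b, k) with hh | hh
          · exact hh
          · exact absurd (Or.inr hh) u2
        have hak : a ≠ k := by
          rintro rfl
          rw [show (s(a, b) : Sym2 V) = s(b, a) from Sym2.eq_swap, hbk0] at hab1
          norm_num at hab1
        have hak1 : x s(a, k) = 1 := by
          rcases u1 with hh | hh
          · exact absurd hh hak
          · exact hh
        have hch : Cherry x b a k :=
          ⟨fun hh => hab hh.symm, hak, hbk, by rw [hswx]; exact hab1, hak1, hbk0⟩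
        rw [if_neg (by rintro ⟨-, -, -, -, e2, -⟩; rw [hbk0] at e2; norm_num at e2),
          if_pos hch, hab1, hsww]
        ring
      · -- b in S, a out
        have hak : a ≠ k := fun hh => u2 (Or.inl hh)
        have hak0 : x s(a, k) = 0 := by
          rcases hB s(a, k) with hh | hh
          · exact hh
          · exact absurd (Or.inr hh) u2
        have hbk : b ≠ k := by
          rintro rfl
          rw [hak0] at hab1
          norm_num at hab1
        have hbk1 : x s(b, k) = 1 := by
          rcases u1 with hh | hh
          · exact absurd hh hbk
          · exact hh
        have hch : Cherry x a b k := ⟨hab, hbk, hak, hab1, hbk1, hak0⟩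
        rw [if_pos hch,
          if_neg (by rintro ⟨-, -, -, -, e2, -⟩; rw [hak0] at e2; norm_num at e2),
          hab1]
        ring
  · rw [if_neg hc]
    rw [if_neg (by
        rintro ⟨u1, u2, u3, e1, e2, e3⟩
        refine hc ((crossP_iff x k a b).mpr (Or.inr ⟨Or.inr e2, ?_⟩))
        rintro (rfl | hh)
        · exact u3 rfl
        · rw [e3] at hh; norm_num at hh),
      if_neg (by
        rintro ⟨u1, u2, u3, e1, e2, e3⟩
        refine hc ((crossP_iff x k a b).mpr (Or.inl ⟨Or.inr e2, ?_⟩))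
        rintro (rfl | hh)
        · exact u3 rfl
        · rw [e3] at hh; norm_num at hh)]
    ring


/-- The split solution along the closed neighborhood of `k`. -/
noncomputable def splitSol (x : Sym2 V → ℝ) (k : V) : Sym2 V → ℝ :=
  fun e => if crossP x k e then 0 else x e

lemma key_improve (w x : Sym2 V → ℝ) (hx : FeasFRP w x)
    (i j k : V) (hij : i ≠ j) (hjk : j ≠ k) (hik : i ≠ k)
    (h1 : x s(i, j) = 1) (h2 : x s(j, k) = 1) (h3 : x s(i, k) = 0) :
    ∃ y : Sym2 V → ℝ, FeasFRP w y ∧ objVal w x < objVal w y := by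
  classical
  obtain ⟨hB, hC⟩ := hx
  have cherry_neg : ∀ a b c : V, Cherry x a b c → w s(a, b) + w s(b, c) < 0 := by
    rintro a b c ⟨hab, hbc, hac, e1, e2, e3⟩
    by_contra hcon
    push_neg at hcon
    have := hC a b c hab hbc hac hcon
    rw [e1, e2, e3] at this
    linarith
  -- Q is negative
  have hQneg : (∑ a : V, ∑ b : V, ∑ c : V, hW w x a b c) < 0 := by
    have hrev : (∑ a : V, ∑ b : V, ∑ c : V, hW w x a b c)
        = ∑ a : V, ∑ b : V, ∑ c : V, hW w x c b a := by
      calc ∑ a : V, ∑ b : V, ∑ c : V, hW w x a b c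
          = ∑ b : V, ∑ a : V, ∑ c : V, hW w x a b c := Finset.sum_comm
        _ = ∑ b : V, ∑ c : V, ∑ a : V, hW w x a b c :=
            Finset.sum_congr rfl (fun b _ => Finset.sum_comm)
        _ = ∑ c : V, ∑ b : V, ∑ a : V, hW w x a b c := Finset.sum_comm
    have hterm_le : ∀ a b c : V, hW w x a b c + hW w x c b a ≤ 0 := by
      intro a b c
      unfold hW
      by_cases hc : Cherry x a b c
      · rw [if_pos hc, if_pos ((cherry_symm x a b c).mp hc)]
        have := cherry_neg a b c hc
        have hsw : (s(c, b) : Sym2 V) = s(b, c) := Sym2.eq_swap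
        rw [hsw]
        linarith
      · rw [if_neg hc, if_neg (fun hh => hc ((cherry_symm x a b c).mpr hh))]
        norm_num
    have hterm_lt : hW w x i j k + hW w x k j i < 0 := by
      have hc : Cherry x i j k := ⟨hij, hjk, hik, h1, h2, h3⟩
      unfold hW
      rw [if_pos hc, if_pos ((cherry_symm x i j k).mp hc)]
      have := cherry_neg i j k hc
      have hsw : (s(k, j) : Sym2 V) = s(j, k) := Sym2.eq_swap
      rw [hsw]
      linarith
    have hlt : (∑ a : V, ∑ b : V, ∑ c : V, (hW w x a b c + hW w x c b a))
          < ∑ _a : V, ∑ _b : V, ∑ _c : V, (0 : ℝ) := by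
        apply Finset.sum_lt_sum
        · intro a _
          apply Finset.sum_le_sum; intro b _
          apply Finset.sum_le_sum; intro c _
          exact hterm_le a b c
        · refine ⟨i, Finset.mem_univ i, ?_⟩
          apply Finset.sum_lt_sum
          · intro b _
            apply Finset.sum_le_sum; intro c _
            exact hterm_le i b c
          · refine ⟨j, Finset.mem_univ j, ?_⟩
            apply Finset.sum_lt_sum
            · intro c _; exact hterm_le i j c
            · exact ⟨k, Finset.mem_univ k, hterm_lt⟩
    simp only [Finset.sum_const_zero, Finset.sum_add_distrib] at hlt
    rw [← hrev] at hlt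
    linarith
  -- sum of all closed-neighborhood cuts equals Q
  have hdouble : ∀ k' : V, 2 * cutv w x k' = ∑ a : V, ∑ b : V, (hW w x a b k' + hW w x b a k') := by
    intro k'
    rw [show (2 : ℝ) * cutv w x k'
        = 2 * ∑ e ∈ Finset.univ.filter (fun e : Sym2 V => ¬ e.IsDiag),
            (if crossP x k' e then w e * x e else 0) from rfl]
    rw [← sum_pairs (fun e => if crossP x k' e then w e * x e else 0)]
    apply Finset.sum_congr rfl; intro a _
    apply Finset.sum_congr rfl; intro b _
    by_cases hab : a ≠ b
    · rw [if_pos hab, cross_point w x hB k' a b hab]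
    · push_neg at hab
      subst hab
      rw [if_neg (by simp)]
      unfold hW
      rw [if_neg (by rintro ⟨u1, -⟩; exact u1 rfl)]
      norm_num
  have hcut_sum : (∑ k' : V, cutv w x k') = ∑ a : V, ∑ b : V, ∑ c : V, hW w x a b c := by
    have e1 : (∑ k' : V, ∑ a : V, ∑ b : V, hW w x a b k')
        = ∑ a : V, ∑ b : V, ∑ c : V, hW w x a b c := by
      calc ∑ k' : V, ∑ a : V, ∑ b : V, hW w x a b k'
          = ∑ a : V, ∑ k' : V, ∑ b : V, hW w x a b k' := Finset.sum_comm
        _ = ∑ a : V, ∑ b : V, ∑ k' : V, hW w x a b k' :=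
            Finset.sum_congr rfl (fun a _ => Finset.sum_comm)
    have e2 : (∑ k' : V, ∑ a : V, ∑ b : V, hW w x b a k')
        = ∑ a : V, ∑ b : V, ∑ c : V, hW w x a b c := by
      calc ∑ k' : V, ∑ a : V, ∑ b : V, hW w x b a k'
          = ∑ k' : V, ∑ b : V, ∑ a : V, hW w x b a k' :=
            Finset.sum_congr rfl (fun k' _ => Finset.sum_comm)
        _ = ∑ b : V, ∑ k' : V, ∑ a : V, hW w x b a k' := Finset.sum_comm
        _ = ∑ b : V, ∑ a : V, ∑ k' : V, hW w x b a k' :=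
            Finset.sum_congr rfl (fun b _ => Finset.sum_comm)
    have h2 : 2 * ∑ k' : V, cutv w x k'
        = 2 * ∑ a : V, ∑ b : V, ∑ c : V, hW w x a b c := by
      rw [Finset.mul_sum]
      calc ∑ k' : V, 2 * cutv w x k'
          = ∑ k' : V, ∑ a : V, ∑ b : V, (hW w x a b k' + hW w x b a k') :=
            Finset.sum_congr rfl (fun k' _ => hdouble k')
        _ = (∑ k' : V, ∑ a : V, ∑ b : V, hW w x a b k')
            + ∑ k' : V, ∑ a : V, ∑ b : V, hW w x b a k' := by
            simp only [Finset.sum_add_distrib]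
        _ = 2 * ∑ a : V, ∑ b : V, ∑ c : V, hW w x a b c := by rw [e1, e2]; ring
    linarith
  have hex : ∃ k₀ : V, cutv w x k₀ < 0 := by
    by_contra hcon
    push_neg at hcon
    have : (0 : ℝ) ≤ ∑ k' : V, cutv w x k' :=
      Finset.sum_nonneg (fun k' _ => hcon k')
    rw [hcut_sum] at this
    linarith
  obtain ⟨k₀, hk₀⟩ := hex
  refine ⟨splitSol x k₀, ?_, ?_⟩
  · -- feasibility of the split solution
    have hyB : IsBinary (splitSol x k₀) := by
      intro e
      unfold splitSol
      by_cases hc : crossP x k₀ e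
      · rw [if_pos hc]; exact Or.inl rfl
      · rw [if_neg hc]; exact hB e
    refine ⟨hyB, ?_⟩
    intro a b c hab hbc hac hw
    have y0 : ∀ e, 0 ≤ splitSol x k₀ e := fun e => by
      rcases hyB e with hh | hh <;> rw [hh] <;> norm_num
    have y1 : ∀ e, splitSol x k₀ e ≤ 1 := fun e => by
      rcases hyB e with hh | hh <;> rw [hh] <;> norm_num
    by_cases c1 : crossP x k₀ s(a, b)
    · have hz : splitSol x k₀ s(a, b) = 0 := by unfold splitSol; rw [if_pos c1]
      rw [hz]
      have := y1 s(b, c); have := y0 s(a, c)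
      linarith
    · by_cases c2 : crossP x k₀ s(b, c)
      · have hz : splitSol x k₀ s(b, c) = 0 := by unfold splitSol; rw [if_pos c2]
        rw [hz]
        have := y1 s(a, b); have := y0 s(a, c)
        linarith
      · have i1 : nbr x k₀ a ↔ nbr x k₀ b := by
          constructor
          · intro ha; by_contra hb
            exact c1 ((crossP_iff x k₀ a b).mpr (Or.inl ⟨ha, hb⟩))
          · intro hb; by_contra ha
            exact c1 ((crossP_iff x k₀ a b).mpr (Or.inr ⟨hb, ha⟩))
        have i2 : nbr x k₀ b ↔ nbr x k₀ c := by
          constructor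
          · intro hb'; by_contra hc'
            exact c2 ((crossP_iff x k₀ b c).mpr (Or.inl ⟨hb', hc'⟩))
          · intro hc'; by_contra hb'
            exact c2 ((crossP_iff x k₀ b c).mpr (Or.inr ⟨hc', hb'⟩))
        have c3 : ¬ crossP x k₀ s(a, c) := by
          intro hh
          rcases (crossP_iff x k₀ a c).mp hh with ⟨u1, u2⟩ | ⟨u1, u2⟩
          · exact u2 (i2.mp (i1.mp u1))
          · exact u2 (i1.mpr (i2.mpr u1))
        have r1 : splitSol x k₀ s(a, b) = x s(a, b) := by unfold splitSol; rw [if_neg c1]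
        have r2 : splitSol x k₀ s(b, c) = x s(b, c) := by unfold splitSol; rw [if_neg c2]
        have r3 : splitSol x k₀ s(a, c) = x s(a, c) := by unfold splitSol; rw [if_neg c3]
        rw [r1, r2, r3]
        exact hC a b c hab hbc hac hw
  · -- strict improvement
    have hobj : objVal w (splitSol x k₀) = objVal w x - cutv w x k₀ := by
      unfold objVal cutv splitSol
      rw [← Finset.sum_sub_distrib]
      apply Finset.sum_congr rfl
      intro e _
      by_cases hc : crossP x k₀ e
      · rw [if_pos hc, if_pos hc]; ring
      · rw [if_neg hc, if_neg hc]; ring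
    rw [hobj]
    linarith

/-- Indicator solution of a finite edge set. -/
noncomputable def indSol (S : Finset (Sym2 V)) : Sym2 V → ℝ :=
  fun e => if e ∈ S then 1 else 0

lemma isBinary_eq_ind {y : Sym2 V → ℝ} (hy : IsBinary y) :
    y = indSol (Finset.univ.filter (fun e => y e = 1)) := by
  classical
  funext e
  unfold indSol
  rcases hy e with h | h
  · rw [if_neg (by simp only [Finset.mem_filter, Finset.mem_univ, true_and, h]; norm_num), h]
  · rw [if_pos (by simp only [Finset.mem_filter, Finset.mem_univ, true_and, h]), h]

lemma exists_opt (w : Sym2 V → ℝ) :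
    ∃ z : Sym2 V → ℝ, FeasFRP w z ∧ ∀ y, FeasFRP w y → objVal w y ≤ objVal w z := by
  classical
  have hne : (Finset.univ.filter
      (fun S : Finset (Sym2 V) => FeasFRP w (indSol S))).Nonempty := by
    refine ⟨∅, ?_⟩
    simp only [Finset.mem_filter, Finset.mem_univ, true_and]
    constructor
    · intro e; left; unfold indSol; rw [if_neg (Finset.notMem_empty e)]
    · intro i j k _ _ _ _
      unfold indSol
      rw [if_neg (Finset.notMem_empty _), if_neg (Finset.notMem_empty _),
        if_neg (Finset.notMem_empty _)]
      norm_num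
  obtain ⟨S, hS, hmax⟩ := Finset.exists_max_image _ (fun S => objVal w (indSol S)) hne
  simp only [Finset.mem_filter, Finset.mem_univ, true_and] at hS
  refine ⟨indSol S, hS, ?_⟩
  intro y hy
  have hrep := isBinary_eq_ind hy.1
  rw [hrep] at hy ⊢
  apply hmax
  simp only [Finset.mem_filter, Finset.mem_univ, true_and]
  exact hy

lemma opt_feasP (w z : Sym2 V → ℝ) (hz : FeasFRP w z)
    (hopt : ∀ y, FeasFRP w y → objVal w y ≤ objVal w z) : FeasP z := by
  refine ⟨hz.1, ?_⟩
  intro i j k hij hjk hik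
  by_contra hcon
  push_neg at hcon
  have hB := hz.1
  have z0 : ∀ e, 0 ≤ z e := fun e => by rcases hB e with h | h <;> rw [h] <;> norm_num
  have z1 : ∀ e, z e ≤ 1 := fun e => by rcases hB e with h | h <;> rw [h] <;> norm_num
  have e1 : z s(i, j) = 1 := by
    rcases hB s(i, j) with h | h
    · exfalso; rw [h] at hcon; linarith [z1 s(j, k), z0 s(i, k)]
    · exact h
  have e2 : z s(j, k) = 1 := by
    rcases hB s(j, k) with h | h
    · exfalso; rw [h] at hcon; linarith [z1 s(i, j), z0 s(i, k)]
    · exact h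
  have e3 : z s(i, k) = 0 := by
    rcases hB s(i, k) with h | h
    · exact h
    · exfalso; rw [h, e1, e2] at hcon; linarith
  obtain ⟨y, hy, hlt⟩ := key_improve w z hz i j k hij hjk hik e1 e2 e3
  exact absurd (hopt y hy) (by linarith)

end Key

/-- Theorem 1: the set of optimal solutions of (FRP) coincides with the set of
optimal solutions of (P). -/
theorem frp_optimal_iff_p_optimal
    {V : Type*} [Fintype V] [DecidableEq V] [Nonempty V]
    (w : Sym2 V → ℝ) (x : Sym2 V → ℝ) :
    (FeasP x ∧ ∀ y : Sym2 V → ℝ, FeasP y → objVal w y ≤ objVal w x) ↔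
    (FeasFRP w x ∧ ∀ y : Sym2 V → ℝ, FeasFRP w y → objVal w y ≤ objVal w x) := by
  constructor
  · rintro ⟨hfeas, hopt⟩
    have hfrp : FeasFRP w x :=
      ⟨hfeas.1, fun i j k hij hjk hik _ => hfeas.2 i j k hij hjk hik⟩
    refine ⟨hfrp, ?_⟩
    intro y hy
    obtain ⟨z, hz, hzopt⟩ := exists_opt (V := V) w
    have hzP : FeasP z := opt_feasP w z hz hzopt
    calc objVal w y ≤ objVal w z := hzopt y hy
      _ ≤ objVal w x := hopt z hzP
  · rintro ⟨hfeas, hopt⟩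
    have hxP : FeasP x := opt_feasP w x hfeas hopt
    refine ⟨hxP, ?_⟩
    intro y hy
    exact hopt y ⟨hy.1, fun i j k hij hjk hik _ => hy.2 i j k hij hjk hik⟩
end

section
/- Let G = (C,F) be a connected finite weighted graph satisfying (C2), and let (S,T) be a minimum-weight cut minimizing the number of crossing edges among all minimum-weight cuts. Then the induced subgraph on T is connected. -/
open Finset
open scoped Classical

lemma cutW_right_union {C : Type*} [Fintype C] [DecidableEq C] (G : SimpleGraph C)
    (w : C → C → ℝ) (S T1 T2 : Finset C) (h : Disjoint T1 T2) :
    cutW G w S (T1 ∪ T2) = cutW G w S T1 + cutW G w S T2 := by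
  simp [cutW, Finset.sum_union h, Finset.sum_add_distrib]

lemma cutW_left_union {C : Type*} [Fintype C] [DecidableEq C] (G : SimpleGraph C)
    (w : C → C → ℝ) (S1 S2 T : Finset C) (h : Disjoint S1 S2) :
    cutW G w (S1 ∪ S2) T = cutW G w S1 T + cutW G w S2 T := by
  simp [cutW, Finset.sum_union h]

lemma nCross_right_union {C : Type*} [Fintype C] [DecidableEq C] (G : SimpleGraph C)
    (S T1 T2 : Finset C) (h : Disjoint T1 T2) :
    nCross G S (T1 ∪ T2) = nCross G S T1 + nCross G S T2 := by
  simp [nCross, Finset.sum_union h, Finset.sum_add_distrib]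

lemma nCross_left_union {C : Type*} [Fintype C] [DecidableEq C] (G : SimpleGraph C)
    (S1 S2 T : Finset C) (h : Disjoint S1 S2) :
    nCross G (S1 ∪ S2) T = nCross G S1 T + nCross G S2 T := by
  simp [nCross, Finset.sum_union h]

lemma cutW_eq_zero {C : Type*} [Fintype C] (G : SimpleGraph C)
    (w : C → C → ℝ) (S T : Finset C)
    (h : ∀ i ∈ S, ∀ j ∈ T, ¬ G.Adj i j) :
    cutW G w S T = 0 := by
  apply Finset.sum_eq_zero
  intro i hi
  apply Finset.sum_eq_zero
  intro j hj
  simp [h i hi j hj]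

lemma nCross_eq_zero_s13 {C : Type*} [Fintype C] (G : SimpleGraph C)
    (S T : Finset C)
    (h : ∀ i ∈ S, ∀ j ∈ T, ¬ G.Adj i j) :
    nCross G S T = 0 := by
  apply Finset.sum_eq_zero
  intro i hi
  apply Finset.sum_eq_zero
  intro j hj
  simp [h i hi j hj]

lemma no_adj_of_nCross_eq_zero {C : Type*} [Fintype C] (G : SimpleGraph C)
    (S T : Finset C) (h : nCross G S T = 0) :
    ∀ i ∈ S, ∀ j ∈ T, ¬ G.Adj i j := by
  intro i hi j hj hadj
  have h1 := Finset.sum_eq_zero_iff.mp h i hi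
  have h2 := Finset.sum_eq_zero_iff.mp h1 j hj
  simp [hadj] at h2

lemma exists_adj_cross {C : Type*} [Fintype C] [DecidableEq C] (G : SimpleGraph C)
    (hG : G.Connected) (A : Finset C) (hA : A.Nonempty) (hAc : Aᶜ.Nonempty) :
    ∃ i ∈ A, ∃ j ∉ A, G.Adj i j := by
  obtain ⟨a, ha⟩ := hA
  obtain ⟨b, hb⟩ := hAc
  obtain ⟨p⟩ := hG a b
  have hb' : b ∉ (↑A : Set C) := by simpa [Finset.mem_compl] using hb
  obtain ⟨d, _, h1, h2⟩ := p.exists_boundary_dart (↑A : Set C) (by simpa using ha) hb'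
  exact ⟨d.fst, by simpa using h1, d.snd, by simpa using h2, d.adj⟩

/-- If `G` is connected, every cut of `G` has nonnegative weight, and `(S, Sᶜ)`
is a minimum-weight cut minimizing the number of crossing edges among all
minimum-weight cuts, then the induced subgraph on `T = Sᶜ` is connected. -/
theorem min_cut_side_connected
    {C : Type*} [Fintype C] [DecidableEq C]
    (G : SimpleGraph C) (w : C → C → ℝ)
    (hw : ∀ i j : C, w i j = w j i)
    (hC1 : G.Connected)
    (hC2 : ∀ S' : Finset C, S'.Nonempty → S'ᶜ.Nonempty → 0 ≤ cutW G w S' S'ᶜ)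
    (S : Finset C) (hS : S.Nonempty) (hT : Sᶜ.Nonempty)
    (hmin : ∀ S' : Finset C, S'.Nonempty → S'ᶜ.Nonempty →
      cutW G w S Sᶜ ≤ cutW G w S' S'ᶜ)
    (hedge : ∀ S' : Finset C, S'.Nonempty → S'ᶜ.Nonempty →
      cutW G w S' S'ᶜ = cutW G w S Sᶜ → nCross G S Sᶜ ≤ nCross G S' S'ᶜ) :
    (G.induce (↑(Sᶜ) : Set C)).Connected := by
  by_contra hcon
  -- the induced graph is nonempty
  have hne : Nonempty (↑(↑(Sᶜ) : Set C)) := by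
    obtain ⟨t, ht⟩ := hT
    exact ⟨⟨t, by simpa using ht⟩⟩
  rw [SimpleGraph.connected_iff] at hcon
  push_neg at hcon
  have hpre : ¬ (G.induce (↑(Sᶜ) : Set C)).Preconnected := fun h => IsEmpty.elim (hcon h) hne.some
  rw [SimpleGraph.Preconnected] at hpre
  push_neg at hpre
  obtain ⟨u, v, huv⟩ := hpre
  -- T1 : vertices of Sᶜ reachable from u within the induced graph
  set T1 : Finset C := Sᶜ.filter (fun x =>
    ∃ hx : x ∈ (↑(Sᶜ) : Set C), (G.induce (↑(Sᶜ) : Set C)).Reachable u ⟨x, hx⟩) with hT1def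
  set T2 : Finset C := Sᶜ \ T1 with hT2def
  have hT1sub : T1 ⊆ Sᶜ := Finset.filter_subset _ _
  have hT1ne : T1.Nonempty := by
    refine ⟨u.1, Finset.mem_filter.mpr ⟨by simpa using u.2, u.2, ?_⟩⟩
    exact SimpleGraph.Reachable.refl _
  have hvT1 : v.1 ∉ T1 := by
    intro hv
    obtain ⟨_, _, hr⟩ := Finset.mem_filter.mp hv
    exact huv hr
  have hT2ne : T2.Nonempty := ⟨v.1, Finset.mem_sdiff.mpr ⟨by simpa using v.2, hvT1⟩⟩
  -- no edges between T1 and T2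
  have hnoadj : ∀ i ∈ T1, ∀ j ∈ T2, ¬ G.Adj i j := by
    intro i hi j hj hadj
    obtain ⟨hiS, hiS', hr⟩ := Finset.mem_filter.mp hi
    obtain ⟨hjS, hjT1⟩ := Finset.mem_sdiff.mp hj
    apply hjT1
    refine Finset.mem_filter.mpr ⟨hjS, by simpa using hjS, ?_⟩
    have hadj' : (G.induce (↑(Sᶜ) : Set C)).Adj ⟨i, hiS'⟩ ⟨j, by simpa using hjS⟩ := by
      simpa using hadj
    exact hr.trans hadj'.reachable
  have hnoadj' : ∀ i ∈ T2, ∀ j ∈ T1, ¬ G.Adj i j := fun i hi j hj h =>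
    hnoadj j hj i hi h.symm
  -- basic set facts
  have hdisj12 : Disjoint T1 T2 := Finset.disjoint_sdiff
  have hdisjS1 : Disjoint S T1 := by
    refine Finset.disjoint_left.mpr fun x hx hx1 => ?_
    exact (Finset.mem_compl.mp (hT1sub hx1)) hx
  have hdisjS2 : Disjoint S T2 := by
    refine Finset.disjoint_left.mpr fun x hx hx2 => ?_
    exact (Finset.mem_compl.mp (Finset.mem_sdiff.mp hx2).1) hx
  have hSc : Sᶜ = T1 ∪ T2 := (Finset.union_sdiff_of_subset hT1sub).symm
  have hcompl1 : (S ∪ T1)ᶜ = T2 := by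
    ext x
    simp only [hT2def, Finset.mem_compl, Finset.mem_union, Finset.mem_sdiff]
    tauto
  have hcompl2 : (S ∪ T2)ᶜ = T1 := by
    ext x
    have hx1 : x ∈ T1 → x ∉ S := fun h => Finset.mem_compl.mp (hT1sub h)
    simp only [hT2def, Finset.mem_compl, Finset.mem_union, Finset.mem_sdiff]
    tauto
  -- cut weight decompositions
  have hsplit : cutW G w S Sᶜ = cutW G w S T1 + cutW G w S T2 := by
    rw [hSc, cutW_right_union _ _ _ _ _ hdisj12]
  have hnsplit : nCross G S Sᶜ = nCross G S T1 + nCross G S T2 := by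
    rw [hSc, nCross_right_union _ _ _ _ hdisj12]
  have hz12 : cutW G w T1 T2 = 0 := cutW_eq_zero _ _ _ _ hnoadj
  have hz21 : cutW G w T2 T1 = 0 := cutW_eq_zero _ _ _ _ hnoadj'
  have hnz12 : nCross G T1 T2 = 0 := nCross_eq_zero_s13 _ _ _ hnoadj
  -- cut (S ∪ T1, T2)
  have hcut1 : cutW G w (S ∪ T1) T2 = cutW G w S T2 := by
    rw [cutW_left_union _ _ _ _ _ hdisjS1, hz12, add_zero]
  -- nonnegativity of cutW S T1 via C2 on S ∪ T2
  have hpos : 0 ≤ cutW G w S T1 := by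
    have h := hC2 (S ∪ T2) (hS.mono Finset.subset_union_left)
      (hcompl2 ▸ hT1ne)
    rwa [hcompl2, cutW_left_union _ _ _ _ _ hdisjS2, hz21, add_zero] at h
  -- min cut gives equality
  have hne1 : (S ∪ T1).Nonempty := hS.mono Finset.subset_union_left
  have hne1c : (S ∪ T1)ᶜ.Nonempty := hcompl1 ▸ hT2ne
  have hle := hmin (S ∪ T1) hne1 hne1c
  rw [hcompl1, hcut1] at hle
  have heq : cutW G w (S ∪ T1) (S ∪ T1)ᶜ = cutW G w S Sᶜ := by
    rw [hcompl1, hcut1]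
    linarith [hsplit, hpos, hle]
  have hnc := hedge (S ∪ T1) hne1 hne1c heq
  rw [hcompl1, nCross_left_union _ _ _ _ hdisjS1, hnz12, add_zero] at hnc
  -- conclude nCross S T1 = 0
  have hzero : nCross G S T1 = 0 := by omega
  have hnoadjS1 := no_adj_of_nCross_eq_zero G S T1 hzero
  -- T1 has no edge to its complement: contradiction with connectivity
  obtain ⟨i, hi, j, hj, hadj⟩ := exists_adj_cross G hC1 T1 hT1ne (by
    obtain ⟨s, hs⟩ := hS
    exact ⟨s, Finset.mem_compl.mpr (Finset.disjoint_left.mp hdisjS1 hs)⟩)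
  by_cases hjS : j ∈ S
  · exact hnoadjS1 j hjS i hi hadj.symm
  · have hjT2 : j ∈ T2 := Finset.mem_sdiff.mpr ⟨Finset.mem_compl.mpr hjS, hj⟩
    exact hnoadj i hi j hjT2 hadj
end

section
/- Let G = (C,F) be a finite weighted graph, (S,T) a cut such that the induced subgraph on T is complete, and s ∈ S with neighborhood T_s = {u ∈ T : {s,u} ∈ F} satisfying ∅ ≠ T_s ≠ T. If condition (C3) holds for G (edges {i,j},{j,k} ∈ F with {i,k} ∉ F imply w_{ij}+w_{jk} < 0), then |T \ T_s| · w({s},T_s) + w(T_s, T \ T_s) < 0. -/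
open Finset
open scoped Classical

/-- Claim 2 key inequality: with `T` inducing a complete subgraph, `s ∈ S`
(disjoint from `T`) having neighborhood `T_s` in `T` with `∅ ≠ T_s ≠ T`, and
(C3) holding for `G`, we get
`|T \ T_s| · w({s},T_s) + w(T_s, T \ T_s) < 0`. -/
theorem partial_neighborhood_inequality
    {C : Type*} [Fintype C] [DecidableEq C]
    (G : SimpleGraph C) (w : C → C → ℝ)
    (hw : ∀ i j : C, w i j = w j i)
    (hC3 : ∀ i j k : C, i ≠ j → j ≠ k → i ≠ k →
      G.Adj i j → G.Adj j k → ¬ G.Adj i k → w i j + w j k < 0)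
    (S T : Finset C) (hdisj : Disjoint S T)
    (hTcomplete : ∀ t ∈ T, ∀ u ∈ T, t ≠ u → G.Adj t u)
    (s : C) (hs : s ∈ S)
    (hne : (T.filter (fun u => G.Adj s u)).Nonempty)
    (hnotall : T.filter (fun u => G.Adj s u) ≠ T) :
    ((T \ T.filter (fun u => G.Adj s u)).card : ℝ) *
        (∑ t ∈ T.filter (fun u => G.Adj s u), w s t) +
      (∑ t ∈ T.filter (fun u => G.Adj s u),
        ∑ u ∈ T \ T.filter (fun u => G.Adj s u), w t u) < 0 := by
  set Ts := T.filter (fun u => G.Adj s u) with hTs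
  set D := T \ Ts with hD
  have hDne : D.Nonempty := by
    rw [hD, Finset.sdiff_nonempty]
    intro hsub
    exact hnotall (Finset.Subset.antisymm (Finset.filter_subset _ _) hsub)
  have key : ∀ t ∈ Ts, ∀ u ∈ D, w s t + w t u < 0 := by
    intro t ht u hu
    have htT : t ∈ T := (Finset.mem_filter.mp ht).1
    have hst : G.Adj s t := (Finset.mem_filter.mp ht).2
    have huT : u ∈ T := (Finset.mem_sdiff.mp hu).1
    have hsu : ¬ G.Adj s u := fun h =>
      (Finset.mem_sdiff.mp hu).2 (Finset.mem_filter.mpr ⟨huT, h⟩)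
    have hsT : s ∉ T := fun h => (Finset.disjoint_left.mp hdisj hs) h
    have hst' : s ≠ t := fun h => hsT (h ▸ htT)
    have hsu' : s ≠ u := fun h => hsT (h ▸ huT)
    have htu : t ≠ u := fun h => hsu (h ▸ hst)
    exact hC3 s t u hst' htu hsu' hst (hTcomplete t htT u huT htu) hsu
  have hlt : ∑ t ∈ Ts, ∑ u ∈ D, (w s t + w t u) < 0 := by
    apply Finset.sum_neg
    · intro t ht
      apply Finset.sum_neg (fun u hu => key t ht u hu) hDne
    · exact hne
  calc ((D.card : ℝ) * ∑ t ∈ Ts, w s t) + ∑ t ∈ Ts, ∑ u ∈ D, w t u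
      = ∑ t ∈ Ts, ∑ u ∈ D, (w s t + w t u) := by
        rw [Finset.mul_sum]
        rw [← Finset.sum_add_distrib]
        congr 1
        ext t
        rw [Finset.sum_add_distrib, Finset.sum_const, nsmul_eq_mul, mul_comm]
    _ < 0 := hlt
end

section
/- In the contracted graph G' = (C',F') obtained from G = (C,F) by merging two universally adjacent vertices p and q into a vertex pq with w'(pq,j) = w(p,j)+w(q,j): if distinct i, k ∈ C' \ {pq} satisfy {i,pq},{pq,k} ∈ F' and {i,k} ∉ F', and G satisfies (C3), then w'(i,pq) + w'(pq,k) < 0. -/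
open scoped Classical

/-- Claim 3, Case 2: in the contraction of two universally adjacent vertices
`p, q` into `pq` (with `w'(pq,j) = w(p,j) + w(q,j)`), if distinct `i, k` (different
from `p` and `q`) satisfy `{i,pq}, {pq,k} ∈ F'` (automatic) and `{i,k} ∉ F'`
(equivalently `{i,k} ∉ F`), and `G` satisfies (C3), then
`w'(i,pq) + w'(pq,k) = (w(i,p) + w(i,q)) + (w(p,k) + w(q,k)) < 0`. -/
theorem contracted_C3_through_pq
    {C : Type*} [Fintype C] [DecidableEq C]
    (G : SimpleGraph C) (w : C → C → ℝ)
    (hw : ∀ i j : C, w i j = w j i)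
    (p q : C) (hpq : p ≠ q)
    (hp : ∀ v : C, v ≠ p → G.Adj p v)
    (hq : ∀ v : C, v ≠ q → G.Adj q v)
    (hC3 : ∀ i j k : C, i ≠ j → j ≠ k → i ≠ k →
      G.Adj i j → G.Adj j k → ¬ G.Adj i k → w i j + w j k < 0)
    (i k : C) (hik : i ≠ k)
    (hip : i ≠ p) (hiq : i ≠ q) (hkp : k ≠ p) (hkq : k ≠ q)
    (hnadj : ¬ G.Adj i k) :
    (w i p + w i q) + (w p k + w q k) < 0 := by
  have h1 : w i p + w p k < 0 :=
    hC3 i p k hip (Ne.symm hkp) hik (hp i hip).symm (hp k hkp) hnadj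
  have h2 : w i q + w q k < 0 :=
    hC3 i q k hiq (Ne.symm hkq) hik (hq i hiq).symm (hq k hkq) hnadj
  linarith
end
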